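/- If p is an undecomposable semiformal pathway that has a strong closing pathway, then p has a strong closing pathway q such that the concatenation p + q is an undecomposable (formal) pathway. -/

import Mathlib

namespace CRNVerif

variable {σ : Type} [DecidableEq σ]

/-- A state is a multiset of species. -/
abbrev State (σ : Type) := Multiset σ
/-- A reaction is a pair (reactants, products) of multisets of species. -/
abbrev Reaction (σ : Type) := Multiset σ × Multiset σ
/-- A pathway is a finite sequence of reactions. -/
abbrev Pathway (σ : Type) := List (Reaction σ)

/-- Result of applying reaction `r` in state `S` (i.e. `S ⊕ r`). -/
def applyRxn (S : State σ) (r : Reaction σ) : State σ := S - r.1 + r.2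

/-- Minimal initial state of a pathway: the smallest state in which
its reactions can occur in succession. -/
def minInit : Pathway σ → State σ
  | [] => 0
  | r :: p => r.1 + (minInit p - r.2)

/-- State reached from `S` after performing all reactions of `p` in order. -/
def finalFrom (S : State σ) : Pathway σ → State σ
  | [] => S
  | r :: p => finalFrom (applyRxn S r) p

/-- The final state of a pathway (starting from its minimal initial state). -/
def finalState (p : Pathway σ) : State σ := finalFrom (minInit p) p

/-- The state `S_i` after the first `i` reactions, starting from the minimal initial state. -/
def stateAt (p : Pathway σ) (i : ℕ) : State σ := finalFrom (minInit p) (p.take i)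

/-- A state is formal if it contains only formal species (as given by `fm`). -/
def FormalState (fm : σ → Bool) (S : State σ) : Prop := ∀ x ∈ S, fm x = true

/-- `Formal(S)`: the multiset obtained by removing all intermediate species from `S`. -/
def formalPart (fm : σ → Bool) (S : State σ) : State σ := S.filter (fun x => fm x = true)

/-- A reaction is trivial if reactants equal products. -/
def TrivialRxn (r : Reaction σ) : Prop := r.1 = r.2

/-- A CRN is a (finite) set of nontrivial reactions. -/
def NontrivialRxns (C : Finset (Reaction σ)) : Prop := ∀ r ∈ C, ¬ TrivialRxn r

/-- A formal CRN contains only formal reactions. -/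
def IsFormalCRN (fm : σ → Bool) (C : Finset (Reaction σ)) : Prop :=
  ∀ r ∈ C, FormalState fm r.1 ∧ FormalState fm r.2

/-- `p` is a pathway of the CRN `C`. -/
def PathwayOf (C : Finset (Reaction σ)) (p : Pathway σ) : Prop := ∀ r ∈ p, r ∈ C

/-- `Interleave l₁ l₂ l`: `l` can be partitioned into the two (order-preserving,
not necessarily contiguous) subsequences `l₁` and `l₂`. -/
inductive Interleave {α : Type u} : List α → List α → List α → Prop
  | nil : Interleave [] [] []
  | left {a : α} {l₁ l₂ l : List α} : Interleave l₁ l₂ l → Interleave (a :: l₁) l₂ (a :: l)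
  | right {a : α} {l₁ l₂ l : List α} : Interleave l₁ l₂ l → Interleave l₁ (a :: l₂) (a :: l)

/-- `InterleaveMany qs p`: `p` is generated by interleaving the lists in `qs`. -/
inductive InterleaveMany {α : Type u} : List (List α) → List α → Prop
  | nil : InterleaveMany [] []
  | cons {q r p : List α} {qs : List (List α)} :
      Interleave q r p → InterleaveMany qs r → InterleaveMany (q :: qs) p

/-- A pathway is semiformal if its minimal initial state is formal. -/
def Semiformal (fm : σ → Bool) (p : Pathway σ) : Prop := FormalState fm (minInit p)

/-- A formal pathway: a (nonempty) pathway whose minimal initial state and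
final state are both formal. -/
def FormalPathway (fm : σ → Bool) (p : Pathway σ) : Prop :=
  p ≠ [] ∧ FormalState fm (minInit p) ∧ FormalState fm (finalState p)

/-- A formal pathway is decomposable if it can be partitioned into two nonempty
subsequences that are each formal pathways. -/
def FDecomposable (fm : σ → Bool) (p : Pathway σ) : Prop :=
  ∃ q₁ q₂, q₁ ≠ [] ∧ q₂ ≠ [] ∧ Interleave q₁ q₂ p ∧
    FormalPathway fm q₁ ∧ FormalPathway fm q₂

/-- A prime formal pathway is a formal pathway that is not decomposable. -/
def PrimePathway (fm : σ → Bool) (p : Pathway σ) : Prop :=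
  FormalPathway fm p ∧ ¬ FDecomposable fm p

/-- The formal basis: the set of (initial state, final state) pairs of prime
formal pathways of `C`. -/
def formalBasis (fm : σ → Bool) (C : Finset (Reaction σ)) : Set (Reaction σ) :=
  { r | ∃ p, PathwayOf C p ∧ PrimePathway fm p ∧ r = (minInit p, finalState p) }

/-- Two sets of reactions are equal up to addition/removal of trivial reactions. -/
def EqUpToTrivial (A B : Set (Reaction σ)) : Prop :=
  {r ∈ A | ¬ TrivialRxn r} = {r ∈ B | ¬ TrivialRxn r}

/-- The reaction at (0-based) index `j` of `p` is a turning point: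
before it only formal species of the initial state appear, from it on only formal
species of the final state appear, and at the moment the turning point fires,
no formal species are left over. -/
def TurningAt (fm : σ → Bool) (p : Pathway σ) (j : ℕ) : Prop :=
  ∃ h : j < p.length,
    (∀ i ≤ j, formalPart fm (stateAt p i) ≤ minInit p) ∧
    (∀ i, j < i → i ≤ p.length → formalPart fm (stateAt p i) ≤ finalState p) ∧
    formalPart fm (stateAt p j - (p.get ⟨j, h⟩).1) = 0

/-- A regular formal pathway: one that implements a formal reaction,
i.e. has a turning point. -/
def RegularPathway (fm : σ → Bool) (p : Pathway σ) : Prop :=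
  FormalPathway fm p ∧ ∃ j, TurningAt fm p j

/-- A CRN is regular if every prime formal pathway is regular. -/
def RegularCRN (fm : σ → Bool) (C : Finset (Reaction σ)) : Prop :=
  ∀ p, PathwayOf C p → PrimePathway fm p → RegularPathway fm p

/-- `q` is a strong closing pathway for `p` (within CRN `C`): it can occur in the
final state of `p`, consumes no formal species, and leads back to a formal state. -/
def ClosingPathway (fm : σ → Bool) (C : Finset (Reaction σ)) (p q : Pathway σ) : Prop :=
  PathwayOf C q ∧ minInit q ≤ finalState p ∧ (∀ r ∈ q, formalPart fm r.1 = 0) ∧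
  FormalState fm (finalFrom (finalState p) q)

/-- A CRN is strongly tidy if every semiformal pathway has a strong closing pathway. -/
def StronglyTidy (fm : σ → Bool) (C : Finset (Reaction σ)) : Prop :=
  ∀ p, PathwayOf C p → Semiformal fm p → ∃ q, ClosingPathway fm C p q

/-- A semiformal pathway is decomposable if it can be partitioned into two
nonempty subsequences that are each semiformal. -/
def SDecomposable (fm : σ → Bool) (p : Pathway σ) : Prop :=
  ∃ q₁ q₂, q₁ ≠ [] ∧ q₂ ≠ [] ∧ Interleave q₁ q₂ p ∧ Semiformal fm q₁ ∧ Semiformal fm q₂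

/-- The width of a pathway: the maximum size of the states it passes through. -/
def width (p : Pathway σ) : ℕ :=
  ((List.range (p.length + 1)).map (fun i => Multiset.card (stateAt p i))).foldr max 0

/-- The branching factor of a CRN. -/
def branching (C : Finset (Reaction σ)) : ℕ :=
  C.sup (fun r => max (Multiset.card r.1) (Multiset.card r.2))

/-- Formal state `T` is reachable from `S` via reactions of `C`. -/
def Reachable (C : Finset (Reaction σ)) (S T : State σ) : Prop :=
  ∃ p, PathwayOf C p ∧ minInit p ≤ S ∧ finalFrom S p = T

/-- `C` and `C'` share no intermediate species: any species occurring in both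
CRNs is formal. -/
def NoSharedIntermediates (fm : σ → Bool) (C C' : Finset (Reaction σ)) : Prop :=
  ∀ r ∈ C, ∀ r' ∈ C', ∀ x : σ, x ∈ r.1 + r.2 → x ∈ r'.1 + r'.2 → fm x = true

/-- The formal closure of a pathway: the minimal state containing the formal part
of every state along the pathway. -/
def formalClosure (fm : σ → Bool) (p : Pathway σ) : State σ :=
  ((List.range (p.length + 1)).map (fun i => formalPart fm (stateAt p i))).foldr (· ∪ ·) 0

/-- The decomposed final states of a semiformal pathway: all pairs of final
states arising from decompositions into two (nonempty) semiformal pathways. -/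
def DFS (fm : σ → Bool) (p : Pathway σ) : Set (State σ × State σ) :=
  { T | ∃ q₁ q₂, q₁ ≠ [] ∧ q₂ ≠ [] ∧ Interleave q₁ q₂ p ∧
        Semiformal fm q₁ ∧ Semiformal fm q₂ ∧ T = (finalState q₁, finalState q₂) }

/-- The minimal state containing the formal parts of all states strictly after index `j`. -/
def rfsAt (fm : σ → Bool) (p : Pathway σ) (j : ℕ) : State σ :=
  (((List.range (p.length + 1)).filter (fun i => j < i)).map
      (fun i => formalPart fm (stateAt p i))).foldr (· ∪ ·) 0

/-- The regular final states of a pathway: the minimal states `T` witnessed by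
potential turning point reactions. -/
def RFS (fm : σ → Bool) (p : Pathway σ) : Set (State σ) :=
  { T | ∃ j, ∃ h : j < p.length,
      (∀ i ≤ j, formalPart fm (stateAt p i) ≤ minInit p) ∧
      formalPart fm (stateAt p j - (p.get ⟨j, h⟩).1) = 0 ∧
      T = rfsAt fm p j }

/-- The signature of a semiformal pathway: (initial state, final state, width,
formal closure, DFS, RFS). -/
def signature (fm : σ → Bool) (p : Pathway σ) :
    State σ × State σ × ℕ × State σ × Set (State σ × State σ) × Set (State σ) :=
  (minInit p, finalState p, width p, formalClosure fm p, DFS fm p, RFS fm p)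

/-- An annotated prime pathway: exactly its chosen turning point is annotated,
with the corresponding formal basis reaction. -/
def GoodAnnotation (fm : σ → Bool) (ap : List (Reaction σ × Option (Reaction σ))) : Prop :=
  PrimePathway fm (ap.map Prod.fst) ∧
  ∃ j, TurningAt fm (ap.map Prod.fst) j ∧
    ap.map Prod.snd = (List.range ap.length).map
      (fun i => if i = j then
          some (minInit (ap.map Prod.fst), finalState (ap.map Prod.fst)) else none)

/-- `p` can be interpreted as `q`: `q` can occur in the initial state of `p`, has
the same net effect, and there is a decomposition of `p` into prime formal pathways
such that replacing a chosen turning point of each by the corresponding formal basis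
element and removing all other reactions yields `q`. -/
def Interpreted (fm : σ → Bool) (p q : Pathway σ) : Prop :=
  minInit q ≤ minInit p ∧
  finalFrom (minInit p) q = finalState p ∧
  ∃ ap : List (Reaction σ × Option (Reaction σ)),
    ap.map Prod.fst = p ∧ (ap.map Prod.snd).reduceOption = q ∧
    ∃ aps, InterleaveMany aps ap ∧ ∀ a ∈ aps, GoodAnnotation fm a

/-!
Take a strong closing pathway `q` of `p` of minimal length. A decomposition of `p ++ q` into two
formal pathways restricts on `p` to a partition into two semiformal subsequences, since a prefix
of a semiformal pathway is semiformal. As `p` is undecomposable, one of the two parts contains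
all of `p`; its remainder is then a strictly shorter strong closing pathway of `p`.
-/

namespace Interleave

variable {α : Type*} {l₁ l₂ l : List α}

theorem symm (h : Interleave l₁ l₂ l) : Interleave l₂ l₁ l := by
  induction h with
  | nil => exact .nil
  | left _ ih => exact .right ih
  | right _ ih => exact .left ih

theorem sublist_left (h : Interleave l₁ l₂ l) : l₁.Sublist l := by
  induction h with
  | nil => exact .slnil
  | left _ ih => exact ih.cons_cons _
  | right _ ih => exact ih.cons _

theorem length_add (h : Interleave l₁ l₂ l) : l₁.length + l₂.length = l.length := by
  induction h with
  | nil => rfl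
  | left _ ih => simp only [List.length_cons, ← ih]; omega
  | right _ ih => simp only [List.length_cons, ← ih]; omega

theorem eq_of_nil_right (h : Interleave l₁ [] l) : l₁ = l :=
  h.sublist_left.eq_of_length (by simpa using h.length_add)

theorem split_append {xs ys : List α} (h : Interleave l₁ l₂ (xs ++ ys)) :
    ∃ a₁ b₁ a₂ b₂, l₁ = a₁ ++ b₁ ∧ l₂ = a₂ ++ b₂ ∧
      Interleave a₁ a₂ xs ∧ Interleave b₁ b₂ ys := by
  induction xs generalizing l₁ l₂ with
  | nil => exact ⟨[], l₁, [], l₂, rfl, rfl, .nil, h⟩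
  | cons x xs ih =>
    cases h with
    | left h =>
      obtain ⟨a₁, b₁, a₂, b₂, rfl, rfl, ha, hb⟩ := ih h
      exact ⟨x :: a₁, b₁, a₂, b₂, rfl, rfl, ha.left, hb⟩
    | right h =>
      obtain ⟨a₁, b₁, a₂, b₂, rfl, rfl, ha, hb⟩ := ih h
      exact ⟨a₁, b₁, x :: a₂, b₂, rfl, rfl, ha.right, hb⟩

end Interleave

theorem finalFrom_append (S : State σ) (a b : Pathway σ) :
    finalFrom S (a ++ b) = finalFrom (finalFrom S a) b := by
  induction a generalizing S with
  | nil => rfl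
  | cons r a ih => exact ih _

theorem finalFrom_add_of_minInit_le {l : Pathway σ} {S : State σ} (h : minInit l ≤ S)
    (T : State σ) : finalFrom (S + T) l = finalFrom S l + T := by
  induction l generalizing S with
  | nil => rfl
  | cons r l ih =>
    have hc a := Multiset.le_iff_count.mp h a
    simp only [minInit, Multiset.count_add, Multiset.count_sub] at hc
    have hshift : applyRxn (S + T) r = applyRxn S r + T := by
      ext a
      simp only [applyRxn, Multiset.count_add, Multiset.count_sub]
      have := hc a; omega
    have hle : minInit l ≤ applyRxn S r := by
      rw [Multiset.le_iff_count]
      intro a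
      simp only [applyRxn, Multiset.count_add, Multiset.count_sub]
      have := hc a; omega
    simp only [finalFrom, hshift, ih hle]

theorem minInit_append (a b : Pathway σ) :
    minInit (a ++ b) = minInit a + (minInit b - finalFrom (minInit a) a) := by
  induction a with
  | nil => simp [minInit, finalFrom]
  | cons r a ih =>
    have hstep : applyRxn (r.1 + (minInit a - r.2)) r = minInit a + (r.2 - minInit a) := by
      ext x
      simp only [applyRxn, Multiset.count_add, Multiset.count_sub]
      omega
    simp only [List.cons_append, minInit, finalFrom, ih, hstep,
      finalFrom_add_of_minInit_le le_rfl]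
    ext x
    simp only [Multiset.count_add, Multiset.count_sub]
    omega

theorem minInit_le_minInit_append (a b : Pathway σ) : minInit a ≤ minInit (a ++ b) := by
  rw [minInit_append]
  exact le_self_add

theorem Semiformal.of_append {fm : σ → Bool} {a b : Pathway σ} (h : Semiformal fm (a ++ b)) :
    Semiformal fm a :=
  fun x hx => h x (Multiset.mem_of_le (minInit_le_minInit_append a b) hx)

theorem formalPart_minInit_eq_zero {fm : σ → Bool} {l : Pathway σ}
    (h : ∀ r ∈ l, formalPart fm r.1 = 0) : formalPart fm (minInit l) = 0 := by
  induction l with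
  | nil => rfl
  | cons r l ih =>
    have hr : formalPart fm r.1 = 0 := h r List.mem_cons_self
    have hl : formalPart fm (minInit l) = 0 := ih fun r' hr' => h r' (List.mem_cons_of_mem _ hr')
    simp only [minInit, formalPart, Multiset.filter_add, Multiset.filter_sub] at hr hl ⊢
    rw [hr, hl, zero_tsub, add_zero]

namespace ClosingPathway

variable {fm : σ → Bool} {C : Finset (Reaction σ)} {p q : Pathway σ}

/-- The part of `minInit b` not supplied by `finalState p` lies in the formal state
`minInit (p ++ b)`, yet it has no formal species since `b` consumes none; so it is empty. -/
theorem of_sublist {b : Pathway σ} (hq : ClosingPathway fm C p q) (hb : b.Sublist q)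
    (hf : FormalPathway fm (p ++ b)) : ClosingPathway fm C p b := by
  obtain ⟨hqC, -, hqnf, -⟩ := hq
  have hbnf : ∀ r ∈ b, formalPart fm r.1 = 0 := fun r hr => hqnf r (hb.subset hr)
  set D := minInit b - finalState p
  have hinit : minInit (p ++ b) = minInit p + D := minInit_append p b
  have hD : D = 0 := by
    refine le_antisymm ?_ zero_le
    have hDformal : FormalState fm D := fun x hx =>
      hf.2.1 x (hinit ▸ Multiset.mem_add.mpr (Or.inr hx))
    calc D = formalPart fm D := (Multiset.filter_eq_self.mpr hDformal).symm
      _ ≤ formalPart fm (minInit b) := Multiset.filter_le_filter _ tsub_le_self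
      _ = 0 := formalPart_minInit_eq_zero hbnf
  refine ⟨fun r hr => hqC r (hb.subset hr), tsub_eq_zero_iff_le.mp hD, hbnf, ?_⟩
  have hfinal := hf.2.2
  rwa [finalState, hinit, hD, add_zero, finalFrom_append] at hfinal

theorem exists_shorter_of_fDecomposable (hu : ¬ SDecomposable fm p)
    (hq : ClosingPathway fm C p q) (hd : FDecomposable fm (p ++ q)) :
    ∃ q', ClosingPathway fm C p q' ∧ q'.length < q.length := by
  obtain ⟨q₁, q₂, hne₁, hne₂, hint, hf₁, hf₂⟩ := hd
  obtain ⟨a₁, b₁, a₂, b₂, rfl, rfl, ha, hb⟩ := hint.split_append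
  have hempty : a₁ = [] ∨ a₂ = [] := by
    by_contra! hne
    exact hu ⟨a₁, a₂, hne.1, hne.2, ha, Semiformal.of_append hf₁.2.1,
      Semiformal.of_append hf₂.2.1⟩
  have hlen := hb.length_add
  rcases hempty with rfl | rfl
  · rw [ha.symm.eq_of_nil_right] at hf₂
    have hb₁ : b₁ ≠ [] := by simpa using hne₁
    exact ⟨b₂, hq.of_sublist hb.symm.sublist_left hf₂, by
      have := List.length_pos_iff.mpr hb₁; omega⟩
  · rw [ha.eq_of_nil_right] at hf₁
    have hb₂ : b₂ ≠ [] := by simpa using hne₂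
    exact ⟨b₁, hq.of_sublist hb.sublist_left hf₁, by
      have := List.length_pos_iff.mpr hb₂; omega⟩

end ClosingPathway

theorem exists_closing_undecomposable_general {σ : Type} [DecidableEq σ] (fm : σ → Bool)
    (C : Finset (Reaction σ)) (p : Pathway σ)
    (hu : ¬ SDecomposable fm p) (q₀ : Pathway σ) (hq₀ : ClosingPathway fm C p q₀) :
    ∃ q : Pathway σ, ClosingPathway fm C p q ∧ ¬ FDecomposable fm (p ++ q) := by
  obtain ⟨q, hq, hmin⟩ := (InvImage.wf List.length wellFounded_lt).has_min
    {q | ClosingPathway fm C p q} ⟨q₀, hq₀⟩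
  refine ⟨q, hq, fun hd => ?_⟩
  obtain ⟨q', hq', hlt⟩ := ClosingPathway.exists_shorter_of_fDecomposable hu hq hd
  exact hmin q' hq' hlt

/-- An undecomposable semiformal pathway with a strong closing pathway has a strong
closing pathway `q` such that `p ++ q` is an undecomposable formal pathway. -/
theorem exists_closing_undecomposable {σ : Type} [DecidableEq σ] (fm : σ → Bool)
    (C : Finset (Reaction σ)) (hC : NontrivialRxns C)
    (p : Pathway σ) (hp : PathwayOf C p) (hs : Semiformal fm p)
    (hu : ¬ SDecomposable fm p) (q₀ : Pathway σ) (hq₀ : ClosingPathway fm C p q₀) :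
    ∃ q : Pathway σ, ClosingPathway fm C p q ∧ ¬ FDecomposable fm (p ++ q) :=
  exists_closing_undecomposable_general fm C p hu q₀ hq₀

end CRNVerif
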